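/- For k ∈ (0, 1) and φ ∈ (0, π/2), F(φ, k) < F₁(sin φ, k), where for 0 < λ < 1, F₁(λ, k) = (1/2)ln((1+λ)/(1−λ)) + (1/λ)ln(2/(1 + √((1 − k²λ²)/(1 − λ²)))) + ((1−k²)/8)ln((1+λ)/(1−λ)), with λ = sin φ. -/

import Mathlib

lemma key_ineq (k L C s : ℝ) (hL0 : 0 < L) (hC0 : 0 < C) (hLC : L^2 + C^2 = 1)
    (hs : 1 < s) (hs2 : s^2 * (1 - L^2) = 1 - k^2 * L^2) :
    (s * C)⁻¹ <
      (1 + (1 - k^2)/4) * (C / (1 - L^2))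
      - (C / L^2) * Real.log (2 / (1 + s))
      - C * (1-k^2) / ((1 - L^2)^2 * s * (1 + s)) := by
  have hC1 : C < 1 := by nlinarith
  have hL1 : L < 1 := by nlinarith
  have hLne : L ≠ 0 := ne_of_gt hL0
  have hCne : C ≠ 0 := ne_of_gt hC0
  have hsne : s ≠ 0 := by linarith
  have h1s : (1:ℝ) + s ≠ 0 := by linarith
  have h1C : 1 - C^2 ≠ 0 := by nlinarith
  have hk2' : 1 - k^2 = (s^2-1)*C^2/L^2 := by
    field_simp
    linear_combination -hs2 + (1 - s^2)*hLC
  have hL2 : L^2 = 1 - C^2 := by linarith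
  have hlog : Real.log (2/(1+s)) ≤ -((s-1)/(1+s)) := by
    have h := Real.log_le_sub_one_of_pos (x := 2/(1+s)) (by positivity)
    have e : 2/(1+s) - 1 = -((s-1)/(1+s)) := by field_simp; ring
    linarith [e ▸ h]
  have hmain : (1 + (1 - k^2)/4) * (C / (1 - L^2))
      + (C / L^2) * ((s-1)/(1+s))
      - C * (1-k^2) / ((1 - L^2)^2 * s * (1 + s))
      - (s * C)⁻¹ = C*(s-1)^2*(s^2+3*s+4)/(4*(1+s)*(1-C^2)*s) := by
    rw [hk2', hL2]
    field_simp
    ring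
  have hpos : 0 < C*(s-1)^2*(s^2+3*s+4)/(4*(1+s)*(1-C^2)*s) := by
    have h1 : (0:ℝ) < (s-1)^2 := by nlinarith
    have h3 : (0:ℝ) < 1 - C^2 := by nlinarith
    have h2 : (0:ℝ) < s^2+3*s+4 := by nlinarith
    apply div_pos
    · exact mul_pos (mul_pos hC0 h1) h2
    · have : (0:ℝ) < 4*(1+s) := by linarith
      exact mul_pos (mul_pos this h3) (by linarith)
  have hmono : (C / L^2) * Real.log (2/(1+s)) ≤ -((C / L^2) * ((s-1)/(1+s))) := by
    have hcl : 0 < C / L^2 := by positivity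
    nlinarith [mul_le_mul_of_nonneg_left hlog (le_of_lt hcl)]
  linarith

lemma hasDerivAt_G (k x : ℝ) (hk1 : k^2 < 1) (hL0 : 0 < Real.sin x) (hC0 : 0 < Real.cos x) :
    HasDerivAt (fun y => (1 / 2) * Real.log ((1 + Real.sin y) / (1 - Real.sin y)) +
        (1 / Real.sin y) *
          Real.log (2 / (1 + Real.sqrt ((1 - k ^ 2 * Real.sin y ^ 2) /
            (1 - Real.sin y ^ 2)))) +
        ((1 - k ^ 2) / 8) * Real.log ((1 + Real.sin y) / (1 - Real.sin y)))
      ((1 + (1 - k^2)/4) * (Real.cos x / (1 - Real.sin x^2))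
        - (Real.cos x / Real.sin x^2) * Real.log (2 / (1 + Real.sqrt ((1 - k ^ 2 * Real.sin x ^ 2) / (1 - Real.sin x ^ 2))))
        - Real.cos x * (1-k^2) / ((1 - Real.sin x^2)^2
            * Real.sqrt ((1 - k ^ 2 * Real.sin x ^ 2) / (1 - Real.sin x ^ 2))
            * (1 + Real.sqrt ((1 - k ^ 2 * Real.sin x ^ 2) / (1 - Real.sin x ^ 2))))) x := by
  have hpy : Real.sin x ^ 2 + Real.cos x ^ 2 = 1 := Real.sin_sq_add_cos_sq x
  set L := Real.sin x with hLdef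
  set C := Real.cos x with hCdef
  have hL1 : L < 1 := by nlinarith
  have hLne : L ≠ 0 := ne_of_gt hL0
  have h1mL : (0:ℝ) < 1 - L := by linarith
  have h1pL : (0:ℝ) < 1 + L := by linarith
  have h1L2 : (0:ℝ) < 1 - L^2 := by nlinarith
  have hkL2 : (0:ℝ) < 1 - k^2*L^2 := by nlinarith [sq_nonneg (k*L), sq_nonneg L]
  have hu0 : (0:ℝ) < (1 - k^2*L^2)/(1 - L^2) := div_pos hkL2 h1L2
  have hS0 : (0:ℝ) < Real.sqrt ((1 - k^2*L^2)/(1 - L^2)) := Real.sqrt_pos.mpr hu0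
  set S := Real.sqrt ((1 - k^2*L^2)/(1 - L^2)) with hSdef
  have h1S : (0:ℝ) < 1 + S := by linarith
  have hsin : HasDerivAt Real.sin C x := Real.hasDerivAt_sin x
  have hA : HasDerivAt (fun y => 1 + Real.sin y) C x := hsin.const_add 1
  have hB : HasDerivAt (fun y => 1 - Real.sin y) (-C) x := hsin.const_sub 1
  have hquot : HasDerivAt (fun y => (1 + Real.sin y)/(1 - Real.sin y))
      ((C * (1 - L) - (1 + L) * (-C)) / (1 - L)^2) x := hA.div hB (ne_of_gt h1mL)
  have hlogq : HasDerivAt (fun y => Real.log ((1 + Real.sin y)/(1 - Real.sin y)))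
      ((C * (1 - L) - (1 + L) * (-C)) / (1 - L)^2 / ((1 + L)/(1 - L))) x :=
    hquot.log (by positivity)
  have hsin2 : HasDerivAt (fun y => Real.sin y ^ 2) (2 * L ^ 1 * C) x := hsin.pow 2
  have hnum : HasDerivAt (fun y => 1 - k^2 * Real.sin y ^ 2) (-(k^2 * (2 * L ^ 1 * C))) x :=
    (hsin2.const_mul (k^2)).const_sub 1
  have hden : HasDerivAt (fun y => 1 - Real.sin y ^ 2) (-(2 * L ^ 1 * C)) x :=
    hsin2.const_sub 1
  have hu : HasDerivAt (fun y => (1 - k^2 * Real.sin y ^ 2)/(1 - Real.sin y ^ 2))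
      (((-(k^2 * (2 * L ^ 1 * C))) * (1 - L^2) - (1 - k^2*L^2) * (-(2 * L ^ 1 * C))) / (1 - L^2)^2) x :=
    hnum.div hden (ne_of_gt h1L2)
  have hSd : HasDerivAt (fun y => Real.sqrt ((1 - k^2 * Real.sin y ^ 2)/(1 - Real.sin y ^ 2)))
      ((((-(k^2 * (2 * L ^ 1 * C))) * (1 - L^2) - (1 - k^2*L^2) * (-(2 * L ^ 1 * C))) / (1 - L^2)^2) / (2 * S)) x :=
    hu.sqrt (ne_of_gt hu0)
  set du := (((-(k^2 * (2 * L ^ 1 * C))) * (1 - L^2) - (1 - k^2*L^2) * (-(2 * L ^ 1 * C))) / (1 - L^2)^2) with hdudef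
  have h1Sd : HasDerivAt (fun y => 1 + Real.sqrt ((1 - k^2 * Real.sin y ^ 2)/(1 - Real.sin y ^ 2)))
      (du / (2 * S)) x := hSd.const_add 1
  have hq2 : HasDerivAt (fun y => 2 / (1 + Real.sqrt ((1 - k^2 * Real.sin y ^ 2)/(1 - Real.sin y ^ 2))))
      ((0 * (1 + S) - 2 * (du / (2 * S))) / (1 + S)^2) x :=
    (hasDerivAt_const x (2:ℝ)).div h1Sd (ne_of_gt h1S)
  have hlog2 : HasDerivAt (fun y => Real.log (2 / (1 + Real.sqrt ((1 - k^2 * Real.sin y ^ 2)/(1 - Real.sin y ^ 2)))))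
      (((0 * (1 + S) - 2 * (du / (2 * S))) / (1 + S)^2) / (2 / (1 + S))) x :=
    hq2.log (by positivity)
  have hinvsin : HasDerivAt (fun y => 1 / Real.sin y) ((0 * L - 1 * C)/L^2) x :=
    (hasDerivAt_const x (1:ℝ)).div hsin hLne
  have hT2 : HasDerivAt (fun y => (1 / Real.sin y) *
      Real.log (2 / (1 + Real.sqrt ((1 - k^2 * Real.sin y ^ 2)/(1 - Real.sin y ^ 2)))))
      (((0 * L - 1 * C)/L^2) * Real.log (2 / (1 + S))
        + (1 / L) * (((0 * (1 + S) - 2 * (du / (2 * S))) / (1 + S)^2) / (2 / (1 + S)))) x :=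
    hinvsin.mul hlog2
  have hT1 := hlogq.const_mul ((1:ℝ)/2)
  have hT3 := hlogq.const_mul ((1 - k^2)/8)
  have htot := (hT1.add hT2).add hT3
  have heq : (fun y => (1/2) * Real.log ((1 + Real.sin y) / (1 - Real.sin y)) +
        (1 / Real.sin y) *
          Real.log (2 / (1 + Real.sqrt ((1 - k ^ 2 * Real.sin y ^ 2) /
            (1 - Real.sin y ^ 2)))) +
        ((1 - k ^ 2) / 8) * Real.log ((1 + Real.sin y) / (1 - Real.sin y)))
      = (fun y => (1/2) * Real.log ((1 + Real.sin y)/(1 - Real.sin y)) +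
          ((1 / Real.sin y) * Real.log (2 / (1 + Real.sqrt ((1 - k^2 * Real.sin y ^ 2)/(1 - Real.sin y ^ 2))))) +
          ((1 - k^2)/8) * Real.log ((1 + Real.sin y)/(1 - Real.sin y))) := by
    funext y; ring_nf
  rw [heq]
  refine htot.congr_deriv ?_
  rw [hdudef]
  have hSne : S ≠ 0 := ne_of_gt hS0
  have h1Sne : (1:ℝ) + S ≠ 0 := ne_of_gt h1S
  field_simp
  ring

lemma cont_f (k : ℝ) (hk1 : k^2 < 1) :
    Continuous (fun ψ : ℝ => (Real.sqrt (1 - k ^ 2 * Real.sin ψ ^ 2))⁻¹) := by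
  have hpos : ∀ ψ : ℝ, (0:ℝ) < 1 - k ^ 2 * Real.sin ψ ^ 2 := by
    intro ψ
    nlinarith [Real.sin_sq_le_one ψ, sq_nonneg (k * Real.sin ψ), sq_nonneg k,
      Real.sin_sq_add_cos_sq ψ, sq_nonneg (Real.cos ψ), sq_nonneg (k * Real.cos ψ)]
  apply Continuous.inv₀
  · exact Real.continuous_sqrt.comp (by continuity)
  · intro ψ
    exact ne_of_gt (Real.sqrt_pos.mpr (hpos ψ))

lemma hasDerivAt_F (k : ℝ) (hk1 : k^2 < 1) (x : ℝ) :
    HasDerivAt (fun y : ℝ => ∫ ψ in (0:ℝ)..y, (Real.sqrt (1 - k ^ 2 * Real.sin ψ ^ 2))⁻¹)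
      ((Real.sqrt (1 - k ^ 2 * Real.sin x ^ 2))⁻¹) x := by
  have hf := cont_f k hk1
  exact intervalIntegral.integral_hasDerivAt_right (hf.intervalIntegrable 0 x)
    (hf.stronglyMeasurableAtFilter _ _) hf.continuousAt

lemma T2_bounds (k L : ℝ) (hk1 : k^2 < 1) (hL0 : 0 < L) (h1L2 : 0 < 1 - L^2) :
    -(L/(2*(1-L^2))) ≤ (1/L) * Real.log (2/(1+Real.sqrt ((1-k^2*L^2)/(1-L^2)))) ∧
    (1/L) * Real.log (2/(1+Real.sqrt ((1-k^2*L^2)/(1-L^2)))) ≤ 0 := by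
  have hkL2 : (0:ℝ) < 1 - k^2*L^2 := by
    nlinarith [mul_nonneg (sq_nonneg k) h1L2.le]
  have hu0 : (0:ℝ) < (1-k^2*L^2)/(1-L^2) := div_pos hkL2 h1L2
  set S := Real.sqrt ((1-k^2*L^2)/(1-L^2)) with hSdef
  have hS0 : (0:ℝ) ≤ S := Real.sqrt_nonneg _
  have hSsq : S^2 = (1-k^2*L^2)/(1-L^2) := Real.sq_sqrt hu0.le
  have hu1 : (1:ℝ) ≤ (1-k^2*L^2)/(1-L^2) := by
    rw [le_div_iff₀ h1L2]
    nlinarith [mul_nonneg (by nlinarith : (0:ℝ) ≤ 1-k^2) (sq_nonneg L)]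
  have hS1 : (1:ℝ) ≤ S := by nlinarith [hSsq, hS0, hu1]
  have h1S : (0:ℝ) < 1 + S := by linarith
  constructor
  · have hlb : -((S-1)/2) ≤ Real.log (2/(1+S)) := by
      have hsub : Real.log ((1+S)/2) ≤ (1+S)/2 - 1 :=
        Real.log_le_sub_one_of_pos (by positivity)
      have hinv : Real.log (2/(1+S)) = -Real.log ((1+S)/2) := by
        rw [show (2:ℝ)/(1+S) = ((1+S)/2)⁻¹ by field_simp, Real.log_inv]
      rw [hinv]
      linarith [hsub]
    have hSb : (S-1)*(1-L^2) ≤ L^2 := by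
      have h1 : (S-1)*(1-L^2) ≤ (S^2-1)*(1-L^2) := by
        nlinarith [mul_nonneg (mul_nonneg hS0 (sub_nonneg.mpr hS1)) h1L2.le]
      have h2 : (S^2-1)*(1-L^2) = (1-k^2)*L^2 := by
        rw [hSsq]; field_simp; ring
      have h3 : (1-k^2)*L^2 ≤ L^2 := by nlinarith [sq_nonneg (k*L), sq_nonneg L, sq_nonneg k]
      linarith [h1, h2, h3]
    have e1 : (1/L) * (-((S-1)/2)) = -((S-1)/(2*L)) := by ring
    have hq : (1/L) * (-((S-1)/2)) ≤ (1/L) * Real.log (2/(1+S)) :=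
      mul_le_mul_of_nonneg_left hlb (by positivity)
    have hq2 : -(L/(2*(1-L^2))) ≤ (1/L) * (-((S-1)/2)) := by
      rw [e1, neg_le_neg_iff, div_le_div_iff₀ (by positivity) (by positivity)]
      nlinarith [hSb]
    linarith [hq, hq2]
  · have hlogle : Real.log (2/(1+S)) ≤ 0 :=
      Real.log_nonpos (by positivity) (by rw [div_le_one (by linarith)]; linarith)
    exact mul_nonpos_of_nonneg_of_nonpos (by positivity) hlogle

theorem F1_overestimates (k : ℝ) (hk : k ∈ Set.Ioo (0:ℝ) 1)
    (φ : ℝ) (hφ : φ ∈ Set.Ioo 0 (Real.pi / 2)) :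
    (∫ ψ in (0:ℝ)..φ, (Real.sqrt (1 - k ^ 2 * Real.sin ψ ^ 2))⁻¹) <
      (1 / 2) * Real.log ((1 + Real.sin φ) / (1 - Real.sin φ)) +
        (1 / Real.sin φ) *
          Real.log (2 / (1 + Real.sqrt ((1 - k ^ 2 * Real.sin φ ^ 2) /
            (1 - Real.sin φ ^ 2)))) +
        ((1 - k ^ 2) / 8) * Real.log ((1 + Real.sin φ) / (1 - Real.sin φ)) := by
  obtain ⟨hk0, hk1'⟩ := hk
  obtain ⟨hφ0, hφ2⟩ := hφ
  have hk1 : k^2 < 1 := by nlinarith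
  have hpi := Real.pi_pos
  set H : ℝ → ℝ := fun y =>
    ((1 / 2) * Real.log ((1 + Real.sin y) / (1 - Real.sin y)) +
      (1 / Real.sin y) *
        Real.log (2 / (1 + Real.sqrt ((1 - k ^ 2 * Real.sin y ^ 2) /
          (1 - Real.sin y ^ 2)))) +
      ((1 - k ^ 2) / 8) * Real.log ((1 + Real.sin y) / (1 - Real.sin y)))
    - ∫ ψ in (0:ℝ)..y, (Real.sqrt (1 - k ^ 2 * Real.sin ψ ^ 2))⁻¹ with hHdef
  -- derivative facts on the open interval
  have hHderiv : ∀ x ∈ Set.Ioo (0:ℝ) (Real.pi/2), HasDerivAt H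
      (((1 + (1 - k^2)/4) * (Real.cos x / (1 - Real.sin x^2))
        - (Real.cos x / Real.sin x^2) * Real.log (2 / (1 + Real.sqrt ((1 - k ^ 2 * Real.sin x ^ 2) / (1 - Real.sin x ^ 2))))
        - Real.cos x * (1-k^2) / ((1 - Real.sin x^2)^2
            * Real.sqrt ((1 - k ^ 2 * Real.sin x ^ 2) / (1 - Real.sin x ^ 2))
            * (1 + Real.sqrt ((1 - k ^ 2 * Real.sin x ^ 2) / (1 - Real.sin x ^ 2)))))
        - (Real.sqrt (1 - k ^ 2 * Real.sin x ^ 2))⁻¹) x := by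
    intro x hx
    have hL0 : 0 < Real.sin x := Real.sin_pos_of_pos_of_lt_pi hx.1 (by linarith [hx.2])
    have hC0 : 0 < Real.cos x := Real.cos_pos_of_mem_Ioo ⟨by linarith [hx.1], hx.2⟩
    rw [hHdef]
    exact (hasDerivAt_G k x hk1 hL0 hC0).sub (hasDerivAt_F k hk1 x)
  have hdpos : ∀ x ∈ Set.Ioo (0:ℝ) (Real.pi/2),
      0 < ((1 + (1 - k^2)/4) * (Real.cos x / (1 - Real.sin x^2))
        - (Real.cos x / Real.sin x^2) * Real.log (2 / (1 + Real.sqrt ((1 - k ^ 2 * Real.sin x ^ 2) / (1 - Real.sin x ^ 2))))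
        - Real.cos x * (1-k^2) / ((1 - Real.sin x^2)^2
            * Real.sqrt ((1 - k ^ 2 * Real.sin x ^ 2) / (1 - Real.sin x ^ 2))
            * (1 + Real.sqrt ((1 - k ^ 2 * Real.sin x ^ 2) / (1 - Real.sin x ^ 2)))))
        - (Real.sqrt (1 - k ^ 2 * Real.sin x ^ 2))⁻¹ := by
    intro x hx
    have hL0 : 0 < Real.sin x := Real.sin_pos_of_pos_of_lt_pi hx.1 (by linarith [hx.2])
    have hC0 : 0 < Real.cos x := Real.cos_pos_of_mem_Ioo ⟨by linarith [hx.1], hx.2⟩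
    have hpy : Real.sin x ^ 2 + Real.cos x ^ 2 = 1 := Real.sin_sq_add_cos_sq x
    set L := Real.sin x
    set C := Real.cos x
    have h1L2 : (0:ℝ) < 1 - L^2 := by nlinarith
    have hkL2 : (0:ℝ) < 1 - k^2*L^2 := by nlinarith [sq_nonneg (k*L)]
    have hu0 : (0:ℝ) < (1 - k^2*L^2)/(1 - L^2) := div_pos hkL2 h1L2
    set S := Real.sqrt ((1 - k^2*L^2)/(1 - L^2)) with hSdef
    have hS0 : (0:ℝ) < S := Real.sqrt_pos.mpr hu0
    have hSsq : S^2 = (1 - k^2*L^2)/(1 - L^2) := Real.sq_sqrt hu0.le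
    have h1u : 1 < (1 - k^2*L^2)/(1 - L^2) := by
      rw [lt_div_iff₀ h1L2]; nlinarith [sq_nonneg (k*L), mul_pos hL0 hL0]
    have hS1 : 1 < S := by nlinarith [hSsq, hS0, h1u]
    have hs2 : S^2 * (1 - L^2) = 1 - k^2 * L^2 := by
      rw [hSsq]; field_simp
    have hsqrt : Real.sqrt (1 - k^2*L^2) = S * C := by
      have hCsq : C^2 = 1 - L^2 := by linarith
      have he : (1 - k^2*L^2) = ((1 - k^2*L^2)/(1 - L^2)) * C^2 := by
        rw [hCsq]; field_simp
      rw [he, Real.sqrt_mul hu0.le, Real.sqrt_sq hC0.le]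
    have hkey := key_ineq k L C S hL0 hC0 hpy hS1 hs2
    rw [sub_pos, hsqrt]
    exact hkey
  have hmono : StrictMonoOn H (Set.Ioo 0 (Real.pi/2)) := by
    apply strictMonoOn_of_deriv_pos (convex_Ioo _ _)
    · intro x hx
      exact ((hHderiv x hx).differentiableAt.continuousAt).continuousWithinAt
    · intro x hx
      rw [interior_Ioo] at hx
      rw [(hHderiv x hx).deriv]
      exact hdpos x hx
  -- limit of H at 0+
  have hlim : Filter.Tendsto H (nhdsWithin 0 (Set.Ioi 0)) (nhds 0) := by
    have hlogc : Filter.Tendsto (fun y => Real.log ((1 + Real.sin y) / (1 - Real.sin y)))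
        (nhds (0:ℝ)) (nhds 0) := by
      have h1 : ContinuousAt (fun y => (1 + Real.sin y) / (1 - Real.sin y)) 0 :=
        ContinuousAt.div (by fun_prop) (by fun_prop) (by simp)
      have h2 : ContinuousAt (fun y => Real.log ((1 + Real.sin y) / (1 - Real.sin y))) 0 :=
        (Real.continuousAt_log (by simp)).comp h1
      have h3 := h2.tendsto
      simpa using h3
    have hlogc2 : Filter.Tendsto (fun y => Real.log ((1 + Real.sin y) / (1 - Real.sin y)))
        (nhdsWithin (0:ℝ) (Set.Ioi 0)) (nhds 0) := hlogc.mono_left nhdsWithin_le_nhds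
    have hT1 : Filter.Tendsto (fun y => (1/2 : ℝ) * Real.log ((1 + Real.sin y) / (1 - Real.sin y)))
        (nhdsWithin 0 (Set.Ioi 0)) (nhds 0) := by
      simpa using hlogc2.const_mul (1/2 : ℝ)
    have hT3 : Filter.Tendsto (fun y => ((1 - k^2)/8 : ℝ) * Real.log ((1 + Real.sin y) / (1 - Real.sin y)))
        (nhdsWithin 0 (Set.Ioi 0)) (nhds 0) := by
      simpa using hlogc2.const_mul ((1 - k^2)/8 : ℝ)
    have hFt : Filter.Tendsto (fun y => ∫ ψ in (0:ℝ)..y, (Real.sqrt (1 - k ^ 2 * Real.sin ψ ^ 2))⁻¹)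
        (nhdsWithin 0 (Set.Ioi 0)) (nhds 0) := by
      have h := (hasDerivAt_F k hk1 0).continuousAt.tendsto
      rw [intervalIntegral.integral_same] at h
      exact h.mono_left nhdsWithin_le_nhds
    have hmem : Set.Ioo (0:ℝ) (Real.pi/2) ∈ nhdsWithin (0:ℝ) (Set.Ioi 0) :=
      Ioo_mem_nhdsGT_of_mem ⟨le_refl 0, Real.pi_div_two_pos⟩
    have hT2 : Filter.Tendsto (fun y => (1 / Real.sin y) *
        Real.log (2 / (1 + Real.sqrt ((1 - k ^ 2 * Real.sin y ^ 2) / (1 - Real.sin y ^ 2)))))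
        (nhdsWithin 0 (Set.Ioi 0)) (nhds 0) := by
      have hgc : Filter.Tendsto (fun y => -(Real.sin y / (2 * (1 - Real.sin y ^ 2))))
          (nhdsWithin (0:ℝ) (Set.Ioi 0)) (nhds 0) := by
        have h1 : ContinuousAt (fun y => -(Real.sin y / (2 * (1 - Real.sin y ^ 2)))) 0 :=
          (ContinuousAt.div (by fun_prop) (by fun_prop) (by simp)).neg
        have h3 := h1.tendsto
        simp only [Real.sin_zero] at h3
        norm_num at h3
        exact h3.mono_left nhdsWithin_le_nhds
      apply tendsto_of_tendsto_of_tendsto_of_le_of_le' hgc tendsto_const_nhds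
      · filter_upwards [hmem] with y hy
        have hL0 : 0 < Real.sin y := Real.sin_pos_of_pos_of_lt_pi hy.1 (by linarith [hy.2])
        have hC0 : 0 < Real.cos y := Real.cos_pos_of_mem_Ioo ⟨by linarith [hy.1], hy.2⟩
        have hpy : Real.sin y ^ 2 + Real.cos y ^ 2 = 1 := Real.sin_sq_add_cos_sq y
        have h1L2 : (0:ℝ) < 1 - Real.sin y^2 := by nlinarith
        exact (T2_bounds k (Real.sin y) hk1 hL0 h1L2).1
      · filter_upwards [hmem] with y hy
        have hL0 : 0 < Real.sin y := Real.sin_pos_of_pos_of_lt_pi hy.1 (by linarith [hy.2])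
        have hC0 : 0 < Real.cos y := Real.cos_pos_of_mem_Ioo ⟨by linarith [hy.1], hy.2⟩
        have hpy : Real.sin y ^ 2 + Real.cos y ^ 2 = 1 := Real.sin_sq_add_cos_sq y
        have h1L2 : (0:ℝ) < 1 - Real.sin y^2 := by nlinarith
        exact (T2_bounds k (Real.sin y) hk1 hL0 h1L2).2
    rw [hHdef]
    have := ((hT1.add hT2).add hT3).sub hFt
    simpa using this
  -- conclude
  have hφmem : φ ∈ Set.Ioo (0:ℝ) (Real.pi/2) := ⟨hφ0, hφ2⟩
  have hφ2mem : φ/2 ∈ Set.Ioo (0:ℝ) (Real.pi/2) := ⟨by linarith, by linarith⟩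
  have hev : ∀ᶠ y in nhdsWithin (0:ℝ) (Set.Ioi 0), H y ≤ H (φ/2) := by
    filter_upwards [Ioo_mem_nhdsGT_of_mem (show (0:ℝ) ∈ Set.Ico 0 (φ/2) from ⟨le_refl 0, by linarith⟩)] with y hy
    exact (hmono ⟨hy.1, by linarith [hy.2]⟩ hφ2mem hy.2).le
  have h0le : (0:ℝ) ≤ H (φ/2) := le_of_tendsto hlim hev
  have hlt : H (φ/2) < H φ := hmono hφ2mem hφmem (by linarith)
  have hfinal : 0 < H φ := lt_of_le_of_lt h0le hlt
  rw [hHdef] at hfinal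
  simp only [sub_pos] at hfinal
  exact hfinal
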